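/- Let (X_n) be a Markov chain on Ω, K ⊆ Ω measurable, τ = inf{n ≥ 1 : X_n ∈ K}, and suppose Σ_{n≥1} sup_{x∈K} P_x(τ ≥ n) < ∞. Then for every α > 0 there exists l ≥ 0 such that for all x ∈ K and all n ≥ l, P_x(∃ i ∈ {n−l, ..., n} : X_i ∈ K) > 1 − α. -/

import Mathlib

/-!
On the event that `K` is not visited during `[n - l, n]`, look at the last visit `j ≤ n - l` to
`K` before time `n`, counting the start in `K` as a visit at time `0`. By the Markov property at
time `j`, each such event has probability at most `sup_{y ∈ K} P_y(τ > n - j)`, so summing over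
`j` bounds the whole event by the tail `∑_{q > l} sup_{y ∈ K} P_y(τ ≥ q)` of the convergent series.
-/

open MeasureTheory Set Filter
open scoped ENNReal

/-- Markov chain family: see the paper, Section 2. -/
def IsMarkovChainFamily {Ω : Type*} [MeasurableSpace Ω] (P : Ω → Measure (ℕ → Ω)) : Prop :=
  (∀ x, IsProbabilityMeasure (P x)) ∧
  (∀ x, P x {ω | ω 0 = x} = 1) ∧
  (∀ (x : Ω) (n : ℕ) (B : Set (ℕ → Ω)), MeasurableSet B →
    ∀ C : Set (ℕ → Ω), MeasurableSet C →
      (∀ ω ω' : ℕ → Ω, (∀ k ≤ n, ω k = ω' k) → (ω ∈ C ↔ ω' ∈ C)) →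
      P x (C ∩ {ω | (fun k => ω (n + k)) ∈ B}) = ∫⁻ ω in C, P (ω n) B ∂ P x)

section

variable {Ω : Type*}

/-- Time `0` counts as a visit to `K`: the chain is started in `K`. -/
def lastVisitEq (K : Set Ω) (n j : ℕ) : Set (ℕ → Ω) :=
  {ω | (0 < j → ω j ∈ K) ∧ ∀ t, j < t → t ≤ n → ω t ∉ K}

lemma setOf_forall_notMem_subset_iUnion_lastVisitEq (K : Set Ω) (m n : ℕ) :
    {ω : ℕ → Ω | ∀ t, m ≤ t → t ≤ n → ω t ∉ K} ⊆
      ⋃ j ∈ Finset.range (m + 1), lastVisitEq K n j := by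
  classical
  intro ω hω
  set j := Nat.findGreatest (fun s => 0 < s → ω s ∈ K) n
  have hjK : 0 < j → ω j ∈ K :=
    Nat.findGreatest_spec (P := fun s => 0 < s → ω s ∈ K) (Nat.zero_le n) (absurd · (lt_irrefl 0))
  have hjm : j ≤ m := not_lt.mp fun hmj =>
    hω j hmj.le (Nat.findGreatest_le n) (hjK (Nat.zero_lt_of_lt hmj))
  refine mem_biUnion (Finset.mem_range_succ_iff.mpr hjm) ⟨hjK, fun t hjt htn htK => ?_⟩
  exact Nat.findGreatest_is_greatest hjt htn fun _ => htK

lemma ENNReal.one_sub_lt_one_sub {a b : ℝ≥0∞} (hab : a < b) (ha : a < 1) : 1 - b < 1 - a := by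
  rcases le_total b 1 with hb | hb
  · exact (ENNReal.cancel_of_ne (ENNReal.sub_ne_top ENNReal.one_ne_top)).tsub_lt_tsub_left_of_le
      hb hab
  · rw [tsub_eq_zero_of_le hb]
    exact tsub_pos_of_lt ha

variable [MeasurableSpace Ω]

/-- `returnTail P K q = sup_{x ∈ K} P_x(τ ≥ q)`. -/
noncomputable def returnTail (P : Ω → Measure (ℕ → Ω)) (K : Set Ω) (q : ℕ) : ℝ≥0∞ :=
  ⨆ x ∈ K, P x {ω | ∀ k, 1 ≤ k → k < q → ω k ∉ K}

lemma measurableSet_setOf_forall_notMem {K : Set Ω} (hK : MeasurableSet K) (p q : ℕ → Prop) :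
    MeasurableSet {ω : ℕ → Ω | ∀ k, p k → q k → ω k ∉ K} := by
  simp only [ofPred_forall]
  exact .iInter fun k => .iInter fun _ => .iInter fun _ => (measurable_pi_apply k hK).compl

namespace IsMarkovChainFamily

variable {P : Ω → Measure (ℕ → Ω)} {K : Set Ω}

lemma measure_mem_and_forall_notMem_le (hP : IsMarkovChainFamily P) (hK : MeasurableSet K)
    (x : Ω) (j n : ℕ) :
    P x {ω | ω j ∈ K ∧ ∀ t, j < t → t ≤ n → ω t ∉ K} ≤ returnTail P K (n - j + 1) := by
  have := hP.1 x
  set B : Set (ℕ → Ω) := {ω | ∀ k, 1 ≤ k → k < n - j + 1 → ω k ∉ K}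
  set C : Set (ℕ → Ω) := (fun ω => ω j) ⁻¹' K
  have hC_dep : ∀ ω ω' : ℕ → Ω, (∀ k ≤ j, ω k = ω' k) → (ω ∈ C ↔ ω' ∈ C) := fun ω ω' h => by
    simp only [C, Set.mem_preimage, h j le_rfl]
  have hsplit : {ω : ℕ → Ω | ω j ∈ K ∧ ∀ t, j < t → t ≤ n → ω t ∉ K}
      = C ∩ {ω | (fun k => ω (j + k)) ∈ B} := by
    ext ω
    simp only [mem_ofPred_eq, mem_inter_iff, Set.mem_preimage, C, B]
    refine and_congr_right fun _ => ⟨fun h k hk₁ hk₂ => h (j + k) (by omega) (by omega),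
      fun h t ht₁ ht₂ => ?_⟩
    simpa [Nat.add_sub_cancel' ht₁.le] using h (t - j) (by omega) (by omega)
  rw [hsplit, hP.2.2 x j B (measurableSet_setOf_forall_notMem hK _ _) C
    (measurable_pi_apply j hK) hC_dep]
  calc ∫⁻ ω in C, P (ω j) B ∂P x
      ≤ ∫⁻ _ in C, returnTail P K (n - j + 1) ∂P x :=
        setLIntegral_mono measurable_const fun ω hω => le_biSup (fun y => P y B) hω
    _ = returnTail P K (n - j + 1) * P x C := setLIntegral_const _ _
    _ ≤ returnTail P K (n - j + 1) := mul_le_of_le_one_right' prob_le_one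

lemma measure_lastVisitEq_le (hP : IsMarkovChainFamily P) (hK : MeasurableSet K) {x : Ω}
    (hx : x ∈ K) (n j : ℕ) : P x (lastVisitEq K n j) ≤ returnTail P K (n - j + 1) := by
  rcases Nat.eq_zero_or_pos j with rfl | hj
  · refine (measure_mono fun ω hω k hk₁ hk₂ => hω.2 k hk₁ (by omega)).trans <|
      le_biSup (fun y => P y {ω | ∀ k, 1 ≤ k → k < n - 0 + 1 → ω k ∉ K}) hx
  · refine (measure_mono ?_).trans (hP.measure_mem_and_forall_notMem_le hK x j n)
    exact fun ω hω => ⟨hω.1 hj, hω.2⟩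

lemma measure_forall_notMem_le (hP : IsMarkovChainFamily P) (hK : MeasurableSet K) {x : Ω}
    (hx : x ∈ K) (m i : ℕ) :
    P x {ω | ∀ t, m ≤ t → t ≤ m + i → ω t ∉ K} ≤ ∑' k, returnTail P K (k + (i + 1)) := by
  set g : ℕ → ℝ≥0∞ := fun k => returnTail P K (k + (i + 1))
  calc P x {ω | ∀ t, m ≤ t → t ≤ m + i → ω t ∉ K}
      ≤ ∑ j ∈ Finset.range (m + 1), P x (lastVisitEq K (m + i) j) :=
        (measure_mono (setOf_forall_notMem_subset_iUnion_lastVisitEq K m (m + i))).trans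
          (measure_biUnion_finset_le _ _)
    _ ≤ ∑ j ∈ Finset.range (m + 1), g (m - j) := Finset.sum_le_sum fun j hj => by
        have hjm := Finset.mem_range_succ_iff.mp hj
        simpa only [g, show m - j + (i + 1) = m + i - j + 1 by omega] using
          hP.measure_lastVisitEq_le hK hx (m + i) j
    _ = ∑ k ∈ Finset.range (m + 1), g k := Finset.sum_range_reflect g (m + 1)
    _ ≤ ∑' k, g k := ENNReal.sum_le_tsum _

end IsMarkovChainFamily

end

theorem stmt8 {Ω : Type*} [MeasurableSpace Ω] (P : Ω → Measure (ℕ → Ω))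
    (hP : IsMarkovChainFamily P) (K : Set Ω) (hK : MeasurableSet K)
    (hsum : (∑' n : ℕ, ⨆ x ∈ K, P x {ω | ∀ k, 1 ≤ k → k < n → ω k ∉ K}) < ⊤) :
    ∀ α : ℝ, 0 < α → ∃ l : ℕ, ∀ x ∈ K, ∀ n, l ≤ n →
      1 - ENNReal.ofReal α < P x {ω | ∃ i, n - l ≤ i ∧ i ≤ n ∧ ω i ∈ K} := by
  intro α hα
  have hε : 0 < min (ENNReal.ofReal α) 1 := lt_min (ENNReal.ofReal_pos.mpr hα) one_pos
  obtain ⟨l, hl⟩ := eventually_atTop.mp <|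
    (ENNReal.tendsto_sum_nat_add (returnTail P K) hsum.ne).eventually_lt_const hε
  refine ⟨l, fun x hx n hn => ?_⟩
  have := hP.1 x
  obtain ⟨m, rfl⟩ := Nat.exists_eq_add_of_le' hn
  have hA := (hP.measure_forall_notMem_le hK hx m l).trans_lt (hl (l + 1) l.le_succ)
  have hcompl : {ω : ℕ → Ω | ∃ i, m + l - l ≤ i ∧ i ≤ m + l ∧ ω i ∈ K}
      = {ω | ∀ t, m ≤ t → t ≤ m + l → ω t ∉ K}ᶜ := by
    ext ω
    simp
  rw [hcompl, prob_compl_eq_one_sub (measurableSet_setOf_forall_notMem hK _ _)]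
  exact ENNReal.one_sub_lt_one_sub (hA.trans_le (min_le_left _ _))
    (hA.trans_le (min_le_right _ _))
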